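/- Let n ≥ 1 and let u : ℝⁿ → ℝ be a C¹ function with u ∈ L²(ℝⁿ). Then, with η_R the rescaled cutoff, ∫_{ℝⁿ} η_R² u (x·∇u) dx = −(n/2) ∫_{ℝⁿ} η_R² u² dx + ε_R, where ε_R → 0 as R → +∞. -/

import Mathlib

open MeasureTheory Real Filter

noncomputable section

/-- `ℝⁿ` as Euclidean space. -/
abbrev En (n : ℕ) := EuclideanSpace ℝ (Fin n)

/-- Partial derivative in the `i`-th coordinate direction. -/
def pderiv' {n : ℕ} (i : Fin n) (u : En n → ℝ) : En n → ℝ :=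
  fun x => fderiv ℝ u x (EuclideanSpace.single i 1)

/-- The geometers' Laplacian `Δu = -∑ ∂²u/∂xᵢ²`. -/
def lap {n : ℕ} (u : En n → ℝ) : En n → ℝ :=
  fun x => -∑ i, pderiv' i (pderiv' i u) x

/-- `|∇u|`, the Euclidean norm of the gradient. -/
def gradNorm {n : ℕ} (u : En n → ℝ) : En n → ℝ :=
  fun x => Real.sqrt (∑ i, (pderiv' i u x) ^ 2)

/-- A smooth cutoff at unit scale: `0 ≤ η ≤ 1`, `η = 1` on `B₀(1)`, `η = 0` outside `B₀(2)`. -/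
def IsCutoff {n : ℕ} (η : En n → ℝ) : Prop :=
  ContDiff ℝ (⊤ : ℕ∞) η ∧ (∀ x, 0 ≤ η x ∧ η x ≤ 1) ∧
    (∀ x, ‖x‖ ≤ 1 → η x = 1) ∧ (∀ x, 2 ≤ ‖x‖ → η x = 0)

/- ### Auxiliary lemmas -/

lemma pderiv_mul {n : ℕ} {f g : En n → ℝ} {x : En n} (hf : DifferentiableAt ℝ f x)
    (hg : DifferentiableAt ℝ g x) (k : Fin n) :
    pderiv' k (fun y => f y * g y) x = pderiv' k f x * g x + f x * pderiv' k g x := by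
  simp only [pderiv', fderiv_fun_mul hf hg, ContinuousLinearMap.add_apply,
    ContinuousLinearMap.smul_apply, smul_eq_mul]
  ring

lemma pderiv_sq {n : ℕ} {f : En n → ℝ} {x : En n} (hf : DifferentiableAt ℝ f x) (k : Fin n) :
    pderiv' k (fun y => f y ^ 2) x = 2 * f x * pderiv' k f x := by
  have h : (fun y => f y ^ 2) = fun y => f y * f y := by funext y; ring
  rw [h, pderiv_mul hf hf]; ring

lemma coord_eq {n : ℕ} (k : Fin n) :
    (fun x : En n => x k) = ⇑(EuclideanSpace.proj k : En n →L[ℝ] ℝ) := by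
  funext x; simp

lemma coord_contDiff {n : ℕ} (k : Fin n) : ContDiff ℝ 1 (fun x : En n => x k) := by
  rw [coord_eq k]; exact (EuclideanSpace.proj k : En n →L[ℝ] ℝ).contDiff

lemma pderiv_coord_self {n : ℕ} (k : Fin n) (x : En n) :
    pderiv' k (fun y : En n => y k) x = 1 := by
  rw [pderiv', coord_eq k, ContinuousLinearMap.fderiv]
  simp [EuclideanSpace.single_apply]

lemma pderiv_scale {n : ℕ} {η : En n → ℝ} (hη : Differentiable ℝ η) (c : ℝ) (k : Fin n)
    (x : En n) : pderiv' k (fun y => η (c • y)) x = c * pderiv' k η (c • x) := by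
  have hL : HasFDerivAt (fun y : En n => c • y) (c • ContinuousLinearMap.id ℝ (En n)) x := by
    exact (hasFDerivAt_id x).const_smul c
  have h : HasFDerivAt (fun y : En n => η (c • y))
      ((fderiv ℝ η (c • x)).comp (c • ContinuousLinearMap.id ℝ (En n))) x :=
    (hη (c • x)).hasFDerivAt.comp x hL
  rw [pderiv', h.fderiv]
  simp [pderiv', smul_eq_mul]

lemma integral_pderiv_eq_zero {n : ℕ} (g : En n → ℝ) (hg : ContDiff ℝ 1 g)
    (hsupp : HasCompactSupport g) (k : Fin n) : ∫ x : En n, pderiv' k g x = 0 := by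
  have hg' : Continuous fun x : En n => fderiv ℝ g x (EuclideanSpace.single k 1) :=
    (hg.continuous_fderiv one_ne_zero).clm_apply continuous_const
  have h1 : Integrable (fun x : En n =>
      (1:ℝ) * fderiv ℝ g x (EuclideanSpace.single k 1)) volume := by
    simpa using hg'.integrable_of_hasCompactSupport (hsupp.fderiv_apply ℝ _)
  have h2 : Integrable (fun x : En n =>
      fderiv ℝ (fun _ : En n => (1:ℝ)) x (EuclideanSpace.single k 1) * g x) volume := by
    simp [fderiv_const]
  have h3 : Integrable (fun x : En n => (1:ℝ) * g x) volume := by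
    simpa using hg.continuous.integrable_of_hasCompactSupport hsupp
  have := integral_mul_fderiv_eq_neg_fderiv_mul_of_integrable h2 h1 h3
    (fun x _ => differentiableAt_const _) (fun x _ => hg.differentiable one_ne_zero x)
  simpa [pderiv', fderiv_const] using this

lemma integrable_of_zero_outside {n : ℕ} {f : En n → ℝ} (hf : Continuous f) {M : ℝ}
    (h : ∀ x, M ≤ ‖x‖ → f x = 0) : Integrable f volume := by
  refine hf.integrable_of_hasCompactSupport
    (HasCompactSupport.intro (isCompact_closedBall (0 : En n) M) fun x hx => h x ?_)
  have : ¬ dist x 0 ≤ M := hx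
  rw [dist_zero_right] at this
  linarith [not_le.mp this]

/-- Identity (4.26): for a `C¹` function `u ∈ L²(ℝⁿ)`,
`∫ η_R² u (x·∇u) = −(n/2)∫ η_R² u² + ε_R` with `ε_R → 0` as `R → ∞`. -/
theorem cutoff_u_radial_term (n : ℕ) (hn : 1 ≤ n) (u : En n → ℝ)
    (hu_reg : ContDiff ℝ 1 u)
    (hu : MemLp u 2 volume)
    (η : En n → ℝ) (hη : IsCutoff η) :
    ∃ ε : ℝ → ℝ, Filter.Tendsto ε Filter.atTop (nhds 0) ∧
      ∀ R : ℝ, 0 < R →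
        (∫ x : En n, (η (R⁻¹ • x)) ^ 2 * u x * ∑ k, x k * pderiv' k u x)
          = -((n : ℝ) / 2) * (∫ x : En n, (η (R⁻¹ • x)) ^ 2 * (u x) ^ 2)
            + ε R := by
  classical
  obtain ⟨hη_smooth, hη_bd, hη_one, hη_zero⟩ := hη
  have hη1 : ContDiff ℝ 1 η := hη_smooth.of_le (by simp)
  have hu_cont : Continuous u := hu_reg.continuous
  have hu' : ∀ k : Fin n, Continuous (pderiv' k u) := fun k =>
    (hu_reg.continuous_fderiv one_ne_zero).clm_apply continuous_const
  have hη_cont : Continuous η := hη_smooth.continuous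
  have hη' : ∀ k : Fin n, Continuous (pderiv' k η) := fun k =>
    (hη1.continuous_fderiv one_ne_zero).clm_apply continuous_const
  -- the rescaled "radial derivative" function
  set ψ : En n → ℝ := fun y => η y * ∑ k, y k * pderiv' k η y with hψ_def
  have hψ_cont : Continuous ψ := by
    apply hη_cont.mul
    exact continuous_finset_sum _ fun k _ => by
      exact ((coord_contDiff k).continuous).mul (hη' k)
  have hψ_out : ∀ y : En n, 2 ≤ ‖y‖ → ψ y = 0 := fun y hy => by
    simp [hψ_def, hη_zero y hy]
  have hψ_in : ∀ y : En n, ‖y‖ < 1 → ψ y = 0 := by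
    intro y hy
    have hmem : y ∈ Metric.ball (0 : En n) 1 := by simpa [dist_zero_right] using hy
    have hev : η =ᶠ[nhds y] fun _ => (1:ℝ) := by
      refine Filter.eventuallyEq_of_mem (Metric.isOpen_ball.mem_nhds hmem) fun z hz => ?_
      exact hη_one z (le_of_lt (by simpa [dist_zero_right] using hz))
    have h0 : ∀ k : Fin n, pderiv' k η y = 0 := by
      intro k
      rw [pderiv', hev.fderiv_eq]
      simp [fderiv_const]
    simp [hψ_def, h0]
  -- a uniform bound on ψ
  have hψ_supp : HasCompactSupport ψ :=
    HasCompactSupport.intro (isCompact_closedBall (0 : En n) 2) fun y hy => by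
      refine hψ_out y ?_
      have : ¬ dist y 0 ≤ 2 := hy
      rw [dist_zero_right] at this; linarith [not_le.mp this]
  obtain ⟨y₀, hy₀⟩ := hψ_cont.norm.exists_forall_ge_of_hasCompactSupport hψ_supp.norm
  set C : ℝ := ‖ψ y₀‖ with hC_def
  have hC : ∀ y, ‖ψ y‖ ≤ C := hy₀
  -- integrability of u²
  have husq : Integrable (fun x : En n => u x ^ 2) volume := hu.integrable_sq
  refine ⟨fun R => -∫ x : En n, u x ^ 2 * ψ (R⁻¹ • x), ?_, ?_⟩
  · -- the error term tends to 0
    have hmeas : ∀ R : ℝ, MeasurableSet {x : En n | R ≤ ‖x‖} := fun R =>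
      (isClosed_le continuous_const continuous_norm).measurableSet
    have tail : Tendsto (fun R : ℝ => ∫ x in {x : En n | R ≤ ‖x‖}, u x ^ 2) atTop (nhds 0) := by
      have hanti : Antitone fun R : ℝ => {x : En n | R ≤ ‖x‖} := by
        intro a b hab x hx
        exact le_trans hab hx
      have h := tendsto_setIntegral_of_antitone (f := fun x : En n => u x ^ 2)
        (μ := volume) hmeas hanti ⟨0, husq.integrableOn⟩
      have hempty : (⋂ R : ℝ, {x : En n | R ≤ ‖x‖}) = (∅ : Set (En n)) := by
        ext x
        simp only [Set.mem_iInter, Set.mem_setOf_eq, Set.mem_empty_iff_false, iff_false,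
          not_forall, not_le]
        exact ⟨‖x‖ + 1, by linarith⟩
      rwa [hempty, Measure.restrict_empty, integral_zero_measure] at h
    refine squeeze_zero_norm' ?_ (by simpa using tail.const_mul C)
    filter_upwards [eventually_gt_atTop (0:ℝ)] with R hR
    have hzero : ∀ x ∉ {x : En n | R ≤ ‖x‖}, u x ^ 2 * ψ (R⁻¹ • x) = 0 := by
      intro x hx
      have hxR : ‖x‖ < R := not_le.mp hx
      have : ‖R⁻¹ • x‖ < 1 := by
        rw [norm_smul, norm_inv, Real.norm_eq_abs, abs_of_pos hR]
        rw [inv_mul_lt_iff₀ hR]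
        simpa using hxR
      rw [hψ_in _ this, mul_zero]
    rw [norm_neg, ← setIntegral_eq_integral_of_forall_compl_eq_zero hzero]
    have hint1 : IntegrableOn (fun x : En n => ‖u x ^ 2 * ψ (R⁻¹ • x)‖)
        {x : En n | R ≤ ‖x‖} volume := by
      refine Integrable.integrableOn ?_
      have := (Integrable.bdd_mul husq
        (hψ_cont.comp (continuous_const_smul R⁻¹)).aestronglyMeasurable
        (Filter.Eventually.of_forall fun x => hC _)).norm
      refine this.congr (Filter.Eventually.of_forall fun x => ?_)
      simp [mul_comm, Function.comp]
    have hint2 : IntegrableOn (fun x : En n => C * u x ^ 2) {x : En n | R ≤ ‖x‖} volume :=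
      (husq.const_mul C).integrableOn
    calc ‖∫ x in {x : En n | R ≤ ‖x‖}, u x ^ 2 * ψ (R⁻¹ • x)‖
        ≤ ∫ x in {x : En n | R ≤ ‖x‖}, ‖u x ^ 2 * ψ (R⁻¹ • x)‖ :=
          norm_integral_le_integral_norm _
      _ ≤ ∫ x in {x : En n | R ≤ ‖x‖}, C * u x ^ 2 := by
          refine setIntegral_mono_on hint1 hint2 (hmeas R) fun x _ => ?_
          have h1 : ‖u x ^ 2‖ = u x ^ 2 := by
            rw [Real.norm_eq_abs]; exact abs_of_nonneg (sq_nonneg _)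
          rw [norm_mul, h1, mul_comm C (u x ^ 2)]
          exact mul_le_mul_of_nonneg_left (hC _) (sq_nonneg _)
      _ = C * ∫ x in {x : En n | R ≤ ‖x‖}, u x ^ 2 := MeasureTheory.integral_const_mul _ _
  · -- the identity for each fixed R > 0
    intro R hR
    set c : ℝ := R⁻¹ with hc_def
    have hc : 0 < c := inv_pos.2 hR
    set ηR : En n → ℝ := fun x => η (c • x) with hηR_def
    have hηR_smooth : ContDiff ℝ 1 ηR := hη1.comp (contDiff_id.const_smul c)
    have hηR_cont : Continuous ηR := hηR_smooth.continuous
    have hηR_diff : Differentiable ℝ ηR := hηR_smooth.differentiable one_ne_zero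
    have hnorm_smul : ∀ x : En n, 2 * R ≤ ‖x‖ → (2:ℝ) ≤ ‖c • x‖ := by
      intro x hx
      rw [norm_smul, Real.norm_eq_abs, abs_of_pos hc]
      have h1 : c * (2 * R) ≤ c * ‖x‖ := mul_le_mul_of_nonneg_left hx hc.le
      have h2 : c * (2 * R) = 2 := by
        rw [hc_def]; field_simp
      linarith
    have hηR_out : ∀ x : En n, 2 * R ≤ ‖x‖ → ηR x = 0 := fun x hx =>
      hη_zero _ (hnorm_smul x hx)
    have hpηR : ∀ (k : Fin n) (x : En n), pderiv' k ηR x = c * pderiv' k η (c • x) :=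
      fun k x => pderiv_scale (hη1.differentiable one_ne_zero) c k x
    set A : En n → ℝ := fun x => ηR x ^ 2 * u x ^ 2 with hA_def
    set Bf : En n → ℝ := fun x => u x ^ 2 * ψ (c • x) with hB_def
    set Cf : En n → ℝ := fun x => ηR x ^ 2 * u x * ∑ k, x k * pderiv' k u x with hCf_def
    set g : Fin n → En n → ℝ := fun k x => x k * (ηR x ^ 2 * u x ^ 2) with hg_def
    have hg_smooth : ∀ k, ContDiff ℝ 1 (g k) := fun k =>
      (coord_contDiff k).mul ((hηR_smooth.pow 2).mul (hu_reg.pow 2))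
    have hg_supp : ∀ k, HasCompactSupport (g k) := fun k =>
      HasCompactSupport.intro (isCompact_closedBall (0 : En n) (2 * R)) fun x hx => by
        have hxn : 2 * R ≤ ‖x‖ := by
          have : ¬ dist x 0 ≤ 2 * R := hx
          rw [dist_zero_right] at this; linarith [not_le.mp this]
        simp [hg_def, hηR_out x hxn]
    have hφdiff : ∀ x, DifferentiableAt ℝ (fun y => ηR y ^ 2 * u y ^ 2) x := fun x =>
      ((hηR_diff x).pow 2).mul ((hu_reg.differentiable one_ne_zero x).pow 2)
    have hpt : ∀ (k : Fin n) (x : En n), pderiv' k (g k) x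
        = A x + x k * ((2 * ηR x * (c * pderiv' k η (c • x))) * u x ^ 2
            + ηR x ^ 2 * (2 * u x * pderiv' k u x)) := by
      intro k x
      have h1 : pderiv' k (g k) x = pderiv' k (fun y : En n => y k) x * (ηR x ^ 2 * u x ^ 2)
          + x k * pderiv' k (fun y => ηR y ^ 2 * u y ^ 2) x :=
        pderiv_mul ((coord_contDiff k).differentiable one_ne_zero x) (hφdiff x) k
      have h2 : pderiv' k (fun y => ηR y ^ 2 * u y ^ 2) x
          = pderiv' k (fun y => ηR y ^ 2) x * u x ^ 2
            + ηR x ^ 2 * pderiv' k (fun y => u y ^ 2) x :=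
        pderiv_mul ((hηR_diff x).pow 2) ((hu_reg.differentiable one_ne_zero x).pow 2) k
      rw [h1, pderiv_coord_self, h2, pderiv_sq (hηR_diff x),
        pderiv_sq (hu_reg.differentiable one_ne_zero x), hpηR]
      simp only [hA_def]
      ring
    have hsum_pt : ∀ x : En n, ∑ k, pderiv' k (g k) x
        = n * A x + 2 * Bf x + 2 * Cf x := by
      intro x
      rw [Finset.sum_congr rfl fun k _ => hpt k x]
      rw [Finset.sum_add_distrib, Finset.sum_const, Finset.card_univ, Fintype.card_fin,
        nsmul_eq_mul]
      have e0 : ∀ k : Fin n, x k * ((2 * ηR x * (c * pderiv' k η (c • x))) * u x ^ 2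
            + ηR x ^ 2 * (2 * u x * pderiv' k u x))
          = 2 * u x ^ 2 * ηR x * ((c • x) k * pderiv' k η (c • x))
            + 2 * ηR x ^ 2 * u x * (x k * pderiv' k u x) := by
        intro k
        have hck : (c • x) k = c * x k := by simp
        rw [hck]; ring
      rw [Finset.sum_congr rfl fun k _ => e0 k, Finset.sum_add_distrib,
        ← Finset.mul_sum, ← Finset.mul_sum]
      simp only [hB_def, hCf_def, hψ_def, hηR_def]
      ring
    have hpg_cont : ∀ k, Continuous (pderiv' k (g k)) := fun k =>
      ((hg_smooth k).continuous_fderiv one_ne_zero).clm_apply continuous_const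
    have hpg_int : ∀ k, Integrable (pderiv' k (g k)) volume := by
      intro k
      refine integrable_of_zero_outside (hpg_cont k) (M := 2 * R) fun x hx => ?_
      rw [hpt k x]
      have h0 : ηR x = 0 := hηR_out x hx
      simp [hA_def, h0]
    have hSum_cont : Continuous fun x : En n => ∑ k, x k * pderiv' k u x :=
      continuous_finset_sum _ fun k _ => ((coord_contDiff k).continuous).mul (hu' k)
    have hA_int : Integrable A volume :=
      integrable_of_zero_outside ((hηR_cont.pow 2).mul (hu_cont.pow 2)) (M := 2 * R)
        fun x hx => by simp [hA_def, hηR_out x hx]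
    have hB_int : Integrable Bf volume :=
      integrable_of_zero_outside ((hu_cont.pow 2).mul (hψ_cont.comp (continuous_const_smul c)))
        (M := 2 * R) fun x hx => by
          simp [hB_def, hψ_out _ (hnorm_smul x hx)]
    have hC_int : Integrable Cf volume :=
      integrable_of_zero_outside (((hηR_cont.pow 2).mul hu_cont).mul hSum_cont) (M := 2 * R)
        fun x hx => by simp [hCf_def, hηR_out x hx]
    have hzero : ∫ x : En n, (n * A x + 2 * Bf x + 2 * Cf x) = 0 := by
      rw [show (fun x : En n => (n : ℝ) * A x + 2 * Bf x + 2 * Cf x)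
          = fun x => ∑ k, pderiv' k (g k) x from funext fun x => (hsum_pt x).symm]
      rw [integral_finset_sum _ fun k _ => hpg_int k]
      exact Finset.sum_eq_zero fun k _ =>
        integral_pderiv_eq_zero (g k) (hg_smooth k) (hg_supp k) k
    have hsplit : (n : ℝ) * (∫ x : En n, A x) + 2 * (∫ x : En n, Bf x)
        + 2 * (∫ x : En n, Cf x) = 0 := by
      have e : ∫ x : En n, (n * A x + 2 * Bf x + 2 * Cf x)
          = (n : ℝ) * (∫ x : En n, A x) + 2 * (∫ x : En n, Bf x)
            + 2 * (∫ x : En n, Cf x) := by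
        have i1 : Integrable (fun x : En n => (n : ℝ) * A x + 2 * Bf x) volume := by
          exact (hA_int.const_mul (n:ℝ)).add (hB_int.const_mul (2:ℝ))
        have i2 : Integrable (fun x : En n => (2:ℝ) * Cf x) volume :=
          hC_int.const_mul (2:ℝ)
        rw [integral_add i1 i2,
          integral_add (hA_int.const_mul (n:ℝ)) (hB_int.const_mul (2:ℝ)),
          integral_const_mul, integral_const_mul, integral_const_mul]
      rw [← e]; exact hzero
    have gC : (∫ x : En n, (η (c • x)) ^ 2 * u x * ∑ k, x k * pderiv' k u x)
        = ∫ x : En n, Cf x := rfl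
    have gA : (∫ x : En n, (η (c • x)) ^ 2 * (u x) ^ 2) = ∫ x : En n, A x := rfl
    have gB : (fun R : ℝ => -∫ x : En n, u x ^ 2 * ψ (R⁻¹ • x)) R
        = -∫ x : En n, Bf x := rfl
    rw [gC, gA, gB]
    linear_combination hsplit / 2
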